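/- For every integer n ≥ 2, with Q = W⁻¹ S₀⁻¹ D₁, the trace of Q² (which equals the sum of the squares of the complex eigenvalues of Q, counted with algebraic multiplicity) equals (n−1)⁴/3 + 2(n−1)²/3. -/
import Mathlib


open Matrix

/-- Truncated conversion operator from Chebyshev `T` coefficients to
ultraspherical `C^(1)` coefficients. -/
noncomputable def S0 (n : ℕ) : Matrix (Fin n) (Fin n) ℝ :=
  Matrix.of fun i j =>
    if (j : ℕ) = (i : ℕ) then (if (i : ℕ) = 0 then 1 else 1 / 2)
    else if (j : ℕ) = (i : ℕ) + 2 then -(1 / 2) else 0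

/-- Truncated first-order ultraspherical differentiation operator. -/
noncomputable def D1 (n : ℕ) : Matrix (Fin n) (Fin n) ℝ :=
  Matrix.of fun i j => if (j : ℕ) = (i : ℕ) + 1 then ((i : ℕ) : ℝ) + 1 else 0

/-- Boundary-condition matrix: first `n-1` rows of the identity, last row all ones. -/
noncomputable def W (n : ℕ) : Matrix (Fin n) (Fin n) ℝ :=
  Matrix.of fun i j => if (i : ℕ) = n - 1 then 1 else if i = j then 1 else 0

/-- Explicit inverse of `W`. -/
noncomputable def Winv (n : ℕ) : Matrix (Fin n) (Fin n) ℝ :=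
  Matrix.of fun i j =>
    if (i : ℕ) = n - 1 then (if (j : ℕ) = n - 1 then 1 else -1)
    else if i = j then 1 else 0

lemma sum_ite_val {n : ℕ} (c : ℕ) (f : Fin n → ℝ) (hc : c < n) :
    (∑ i : Fin n, if (i : ℕ) = c then f i else 0) = f ⟨c, hc⟩ := by
  rw [Finset.sum_eq_single ⟨c, hc⟩]
  · simp
  · intro i _ hi
    rw [if_neg]
    exact fun h => hi (Fin.ext h)
  · simp

lemma W_mul_Winv (n : ℕ) (hn : 2 ≤ n) : W n * Winv n = 1 := by
  have hL : n - 1 < n := by omega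
  ext i j
  rw [Matrix.mul_apply, Matrix.one_apply]
  rcases eq_or_ne (i : ℕ) (n - 1) with hi | hi
  · have hrow : ∀ k : Fin n, W n i k = 1 := by intro k; simp [W, hi]
    simp only [hrow, one_mul]
    rcases eq_or_ne (j : ℕ) (n - 1) with hj | hj
    · have hij : i = j := Fin.ext (by omega)
      rw [if_pos hij]
      have hv : ∀ k : Fin n, Winv n k j = if (k : ℕ) = n - 1 then (1:ℝ) else 0 := by
        intro k
        simp only [Winv, Matrix.of_apply]
        rcases eq_or_ne (k : ℕ) (n - 1) with hk | hk
        · simp [hk, hj]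
        · have hkj : k ≠ j := fun h => hk (by rw [h, hj])
          simp [hk, hkj]
      simp only [hv]
      rw [sum_ite_val (n - 1) (fun _ => (1:ℝ)) hL]
    · have hij : i ≠ j := fun h => hj (h ▸ hi)
      rw [if_neg hij]
      have hv : ∀ k : Fin n, Winv n k j =
          (if (k : ℕ) = n - 1 then (-1:ℝ) else 0) + (if k = j then 1 else 0) := by
        intro k
        simp only [Winv, Matrix.of_apply]
        rcases eq_or_ne (k : ℕ) (n - 1) with hk | hk
        · rw [if_pos hk, if_pos hk, if_neg hj, if_neg, add_zero]
          intro h; exact hj (h ▸ hk)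
        · rw [if_neg hk, if_neg hk, zero_add]
      simp only [hv]
      rw [Finset.sum_add_distrib, sum_ite_val (n - 1) (fun _ => (-1:ℝ)) hL,
        Finset.sum_ite_eq' Finset.univ j (fun _ => (1:ℝ))]
      simp
  · have hrow : ∀ k : Fin n, W n i k = if i = k then (1:ℝ) else 0 := by
      intro k; simp [W, hi]
    simp only [hrow, ite_mul, one_mul, zero_mul]
    rw [Finset.sum_ite_eq Finset.univ i (fun k => Winv n k j)]
    simp only [Finset.mem_univ, if_true]
    simp [Winv, hi]

lemma S0_tri (n : ℕ) : (S0 n).BlockTriangular id := by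
  intro i j h
  have hlt : (j : ℕ) < (i : ℕ) := h
  simp only [S0, Matrix.of_apply]
  rw [if_neg (by omega), if_neg (by omega)]

lemma S0_det_isUnit (n : ℕ) : IsUnit (S0 n).det := by
  rw [Matrix.det_of_upperTriangular (S0_tri n), isUnit_iff_ne_zero]
  apply Finset.prod_ne_zero_iff.mpr
  intro i _
  simp only [S0, Matrix.of_apply, if_pos rfl]
  split_ifs <;> norm_num

lemma B_tri (n : ℕ) (i j : Fin n) (hij : (j : ℕ) ≤ (i : ℕ)) :
    ((S0 n)⁻¹ * D1 n) i j = 0 := by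
  haveI := (S0 n).invertibleOfIsUnitDet (S0_det_isUnit n)
  have htri := Matrix.blockTriangular_inv_of_blockTriangular (S0_tri n)
  rw [Matrix.mul_apply]
  apply Finset.sum_eq_zero
  intro k _
  rcases eq_or_ne ((j : ℕ)) ((k : ℕ) + 1) with h | h
  · have hki : k < i := by rw [Fin.lt_def]; omega
    rw [htri hki, zero_mul]
  · have : D1 n k j = 0 := by simp only [D1, Matrix.of_apply]; rw [if_neg h]
    rw [this, mul_zero]

lemma S0_col_sum {n : ℕ} (f : Fin n → ℝ) (j : Fin n) :
    ∑ i : Fin n, f i * S0 n i j =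
      (if (j : ℕ) = 0 then f j else f j * (1 / 2)) -
      (if h : 2 ≤ (j : ℕ) then
        f ⟨(j : ℕ) - 2, lt_of_le_of_lt (Nat.sub_le _ _) j.isLt⟩ * (1 / 2) else 0) := by
  have hsplit : ∀ i : Fin n, S0 n i j =
      (if (i : ℕ) = (j : ℕ) then (if (i : ℕ) = 0 then (1:ℝ) else 1 / 2) else 0) +
      (if (i : ℕ) + 2 = (j : ℕ) then -(1 / 2) else 0) := by
    intro i
    simp only [S0, Matrix.of_apply]
    split_ifs <;> first | omega | norm_num
  simp only [hsplit, mul_add, Finset.sum_add_distrib, mul_ite, mul_zero, mul_neg]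
  rcases Nat.lt_or_ge ((j : ℕ)) 2 with h2 | h2
  · rw [dif_neg (by omega), sub_zero]
    have hz : ∑ i : Fin n, (if (i : ℕ) + 2 = (j : ℕ) then -(f i * (1 / 2)) else 0) = 0 :=
      Finset.sum_eq_zero fun i _ => if_neg (by omega)
    rw [hz, add_zero, sum_ite_val ((j : ℕ)) (fun i => if (i : ℕ) = 0 then f i * 1 else f i * (1/2)) j.isLt]
    simp only [Fin.eta, mul_one]
  · rw [dif_pos h2]
    simp only [show ∀ m : ℕ, (m + 2 = (j : ℕ)) ↔ (m = (j : ℕ) - 2) from fun m => by omega]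
    rw [sum_ite_val ((j : ℕ)) (fun i => if (i : ℕ) = 0 then f i * 1 else f i * (1/2)) j.isLt,
      sum_ite_val ((j : ℕ) - 2) (fun i => -(f i * (1 / 2)))
        (lt_of_le_of_lt (Nat.sub_le _ _) j.isLt)]
    simp only [Fin.eta]
    rw [if_neg (by omega : ¬ (j : ℕ) = 0), if_neg (by omega : ¬ (j : ℕ) = 0)]
    ring

lemma vec_r_S0 (n : ℕ) :
    Matrix.vecMul (fun i : Fin n => ((i : ℕ) : ℝ) + 1) (S0 n) = fun _ => 1 := by
  funext j
  show ∑ i : Fin n, (((i : ℕ) : ℝ) + 1) * S0 n i j = 1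
  rw [S0_col_sum]
  rcases Nat.lt_or_ge ((j : ℕ)) 2 with h2 | h2
  · rw [dif_neg (by omega), sub_zero]
    rcases (by omega : (j : ℕ) = 0 ∨ (j : ℕ) = 1) with h | h <;> simp [h] <;> norm_num
  · rw [dif_pos h2, if_neg (by omega)]
    have hc : ((((j : ℕ) - 2 : ℕ)) : ℝ) = ((j : ℕ) : ℝ) - 2 := by
      push_cast [Nat.cast_sub h2]; ring
    simp only [hc]
    ring

lemma vec_t_S0 (n : ℕ) :
    Matrix.vecMul (fun i : Fin n => ((i : ℕ) : ℝ) * (((i : ℕ) : ℝ) + 1) * (((i : ℕ) : ℝ) + 2) / 3)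
      (S0 n) = fun j : Fin n => ((j : ℕ) : ℝ) ^ 2 := by
  funext j
  show ∑ i : Fin n, (((i : ℕ) : ℝ) * (((i : ℕ) : ℝ) + 1) * (((i : ℕ) : ℝ) + 2) / 3) * S0 n i j
      = ((j : ℕ) : ℝ) ^ 2
  rw [S0_col_sum]
  rcases Nat.lt_or_ge ((j : ℕ)) 2 with h2 | h2
  · rw [dif_neg (by omega), sub_zero]
    rcases (by omega : (j : ℕ) = 0 ∨ (j : ℕ) = 1) with h | h <;> simp [h] <;> norm_num
  · rw [dif_pos h2, if_neg (by omega)]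
    have hc : ((((j : ℕ) - 2 : ℕ)) : ℝ) = ((j : ℕ) : ℝ) - 2 := by
      push_cast [Nat.cast_sub h2]; ring
    simp only [hc]
    ring

lemma sum_mul_D1 {n : ℕ} (f : Fin n → ℝ) (j : Fin n) :
    ∑ k : Fin n, f k * D1 n k j =
      if h : 1 ≤ (j : ℕ) then
        f ⟨(j : ℕ) - 1, lt_of_le_of_lt (Nat.sub_le _ _) j.isLt⟩ * ((j : ℕ) : ℝ) else 0 := by
  rcases Nat.lt_or_ge ((j : ℕ)) 1 with h1 | h1
  · rw [dif_neg (by omega)]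
    apply Finset.sum_eq_zero
    intro k _
    simp only [D1, Matrix.of_apply]
    rw [if_neg (by omega), mul_zero]
  · rw [dif_pos h1]
    simp only [D1, Matrix.of_apply, mul_ite, mul_zero,
      show ∀ m : ℕ, ((j : ℕ) = m + 1) ↔ (m = (j : ℕ) - 1) from fun m => by omega]
    rw [sum_ite_val ((j : ℕ) - 1) (fun k => f k * (((k : ℕ) : ℝ) + 1))
      (lt_of_le_of_lt (Nat.sub_le _ _) j.isLt)]
    have hc : ((((j : ℕ) - 1 : ℕ)) : ℝ) + 1 = ((j : ℕ) : ℝ) := by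
      push_cast [Nat.cast_sub h1]; ring
    simp only [Fin.eta]
    rw [hc]

lemma colsum (n : ℕ) (j : Fin n) :
    ∑ k : Fin n, ((S0 n)⁻¹ * D1 n) k j = ((j : ℕ) : ℝ) ^ 2 := by
  have hinv : S0 n * (S0 n)⁻¹ = 1 := Matrix.mul_nonsing_inv _ (S0_det_isUnit n)
  have h1 : Matrix.vecMul (fun _ : Fin n => (1:ℝ)) ((S0 n)⁻¹) =
      fun i : Fin n => ((i : ℕ) : ℝ) + 1 := by
    conv_lhs => rw [show (fun _ : Fin n => (1:ℝ)) = Matrix.vecMul (fun i : Fin n => ((i : ℕ) : ℝ) + 1) (S0 n) from (vec_r_S0 n).symm]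
    rw [Matrix.vecMul_vecMul, hinv, Matrix.vecMul_one]
  have key : Matrix.vecMul (fun _ : Fin n => (1:ℝ)) ((S0 n)⁻¹ * D1 n) =
      Matrix.vecMul (fun i : Fin n => ((i : ℕ) : ℝ) + 1) (D1 n) := by
    rw [← Matrix.vecMul_vecMul, h1]
  have := congrFun key j
  simp only [Matrix.vecMul, dotProduct, one_mul] at this
  rw [this, sum_mul_D1]
  rcases Nat.lt_or_ge ((j : ℕ)) 1 with h1' | h1'
  · rw [dif_neg (by omega)]
    have : (j : ℕ) = 0 := by omega
    simp [this]
  · rw [dif_pos h1']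
    have hc : ((((j : ℕ) - 1 : ℕ)) : ℝ) + 1 = ((j : ℕ) : ℝ) := by
      push_cast [Nat.cast_sub h1']; ring
    simp only
    rw [hc]
    ring

lemma sqsum (n : ℕ) (j : Fin n) :
    ∑ k : Fin n, ((k : ℕ) : ℝ) ^ 2 * ((S0 n)⁻¹ * D1 n) k j =
      ((j : ℕ) : ℝ) ^ 2 * (((j : ℕ) : ℝ) ^ 2 - 1) / 3 := by
  have hinv : S0 n * (S0 n)⁻¹ = 1 := Matrix.mul_nonsing_inv _ (S0_det_isUnit n)
  have h1 : Matrix.vecMul (fun i : Fin n => ((i : ℕ) : ℝ) ^ 2) ((S0 n)⁻¹) =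
      fun i : Fin n => ((i : ℕ) : ℝ) * (((i : ℕ) : ℝ) + 1) * (((i : ℕ) : ℝ) + 2) / 3 := by
    conv_lhs => rw [show (fun i : Fin n => ((i : ℕ) : ℝ) ^ 2) = Matrix.vecMul (fun i : Fin n => ((i : ℕ) : ℝ) * (((i : ℕ) : ℝ) + 1) * (((i : ℕ) : ℝ) + 2) / 3) (S0 n) from (vec_t_S0 n).symm]
    rw [Matrix.vecMul_vecMul, hinv, Matrix.vecMul_one]
  have key : Matrix.vecMul (fun i : Fin n => ((i : ℕ) : ℝ) ^ 2) ((S0 n)⁻¹ * D1 n) =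
      Matrix.vecMul (fun i : Fin n => ((i : ℕ) : ℝ) * (((i : ℕ) : ℝ) + 1) * (((i : ℕ) : ℝ) + 2) / 3) (D1 n) := by
    rw [← Matrix.vecMul_vecMul, h1]
  have := congrFun key j
  simp only [Matrix.vecMul, dotProduct] at this
  rw [this, sum_mul_D1]
  rcases Nat.lt_or_ge ((j : ℕ)) 1 with h1' | h1'
  · rw [dif_neg (by omega)]
    have : (j : ℕ) = 0 := by omega
    simp [this]
  · rw [dif_pos h1']
    have hc : ((((j : ℕ) - 1 : ℕ)) : ℝ) = ((j : ℕ) : ℝ) - 1 := by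
      push_cast [Nat.cast_sub h1']; ring
    simp only
    rw [hc]
    ring

/-- For every `n ≥ 2`, with `Q = W⁻¹ S₀⁻¹ D₁`, the trace of `Q²` (the sum of the squares of
the complex eigenvalues of `Q`) equals `(n-1)⁴/3 + 2(n-1)²/3`. -/
theorem stmt3 (n : ℕ) (hn : 2 ≤ n) :
    let Q := (W n)⁻¹ * (S0 n)⁻¹ * D1 n
    Matrix.trace (Q * Q) = ((n : ℝ) - 1) ^ 4 / 3 + 2 * ((n : ℝ) - 1) ^ 2 / 3 := by
  intro Q
  have hQ : Q = Winv n * ((S0 n)⁻¹ * D1 n) := by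
    show (W n)⁻¹ * (S0 n)⁻¹ * D1 n = Winv n * ((S0 n)⁻¹ * D1 n)
    rw [Matrix.inv_eq_right_inv (W_mul_Winv n hn), Matrix.mul_assoc]
  set B : Matrix (Fin n) (Fin n) ℝ := (S0 n)⁻¹ * D1 n with hB
  have hLlt : n - 1 < n := by omega
  set L : Fin n := ⟨n - 1, hLlt⟩ with hLdef
  have hBL : ∀ i j : Fin n, (j : ℕ) ≤ (i : ℕ) → B i j = 0 := by
    intro i j h; rw [hB]; exact B_tri n i j h
  have hQent : ∀ i j : Fin n, Q i j =
      if (i : ℕ) = n - 1 then -((j : ℕ) : ℝ) ^ 2 else B i j := by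
    intro i j
    rw [hQ, Matrix.mul_apply]
    rcases eq_or_ne (i : ℕ) (n - 1) with hi | hi
    · rw [if_pos hi]
      have hterm : ∀ k : Fin n, Winv n i k * B k j = -(B k j) := by
        intro k
        simp only [Winv, Matrix.of_apply, if_pos hi]
        rcases eq_or_ne (k : ℕ) (n - 1) with hk | hk
        · rw [if_pos hk, one_mul, hBL k j (by have := j.isLt; omega), neg_zero]
        · rw [if_neg hk, neg_one_mul]
      simp only [hterm]
      rw [Finset.sum_neg_distrib]
      rw [show ∑ k : Fin n, B k j = ((j : ℕ) : ℝ) ^ 2 from by rw [hB]; exact colsum n j]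
    · rw [if_neg hi]
      have hterm : ∀ k : Fin n, Winv n i k * B k j = if i = k then B k j else 0 := by
        intro k
        simp only [Winv, Matrix.of_apply, if_neg hi, ite_mul, one_mul, zero_mul]
      simp only [hterm]
      rw [Finset.sum_ite_eq Finset.univ i (fun k => B k j)]
      simp
  have hzero : ∀ i j : Fin n, (i : ℕ) ≠ n - 1 → (j : ℕ) ≠ n - 1 → Q i j * Q j i = 0 := by
    intro i j hi hj
    rw [hQent i j, hQent j i, if_neg hi, if_neg hj]
    rcases le_total ((i : ℕ)) ((j : ℕ)) with h | h
    · rw [hBL j i h, mul_zero]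
    · rw [hBL i j h, zero_mul]
  have htr : Matrix.trace (Q * Q) = ∑ i : Fin n, ∑ j : Fin n, Q i j * Q j i := by
    simp [Matrix.trace, Matrix.diag, Matrix.mul_apply]
  rw [htr]
  have hLval : (L : ℕ) = n - 1 := rfl
  have hne : ∀ i : Fin n, i ∈ Finset.univ.erase L → (i : ℕ) ≠ n - 1 := by
    intro i hi h
    exact (Finset.mem_erase.mp hi).1 (Fin.ext (h.trans hLval.symm))
  have houter : ∑ i : Fin n, ∑ j : Fin n, Q i j * Q j i =
      (∑ j : Fin n, Q L j * Q j L) +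
        ∑ i ∈ Finset.univ.erase L, ∑ j : Fin n, Q i j * Q j i :=
    (Finset.add_sum_erase Finset.univ (fun i => ∑ j : Fin n, Q i j * Q j i)
      (Finset.mem_univ L)).symm
  rw [houter]
  have hinner1 : ∑ j : Fin n, Q L j * Q j L =
      Q L L * Q L L + ∑ j ∈ Finset.univ.erase L, Q L j * Q j L :=
    (Finset.add_sum_erase Finset.univ (fun j => Q L j * Q j L)
      (Finset.mem_univ L)).symm
  rw [hinner1]
  have hQLL : Q L L = -((n - 1 : ℕ) : ℝ) ^ 2 := by
    rw [hQent L L, if_pos hLval]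
  have he1 : ∑ j ∈ Finset.univ.erase L, Q L j * Q j L =
      -(∑ j ∈ Finset.univ.erase L, ((j : ℕ) : ℝ) ^ 2 * B j L) := by
    rw [← Finset.sum_neg_distrib]
    apply Finset.sum_congr rfl
    intro j hj
    rw [hQent L j, hQent j L, if_pos hLval, if_neg (hne j hj)]
    ring
  have he2 : ∀ i : Fin n, i ∈ Finset.univ.erase L →
      ∑ j : Fin n, Q i j * Q j i = -(((i : ℕ) : ℝ) ^ 2 * B i L) := by
    intro i hi
    rw [(Finset.add_sum_erase Finset.univ (fun j => Q i j * Q j i)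
      (Finset.mem_univ L)).symm]
    rw [Finset.sum_eq_zero (fun j hj => hzero i j (hne i hi) (hne j hj)), add_zero]
    rw [hQent i L, hQent L i, if_neg (hne i hi), if_pos hLval]
    ring
  rw [he1, Finset.sum_congr rfl he2, Finset.sum_neg_distrib]
  have hkey : ∑ j ∈ Finset.univ.erase L, ((j : ℕ) : ℝ) ^ 2 * B j L =
      ((n - 1 : ℕ) : ℝ) ^ 2 * (((n - 1 : ℕ) : ℝ) ^ 2 - 1) / 3 := by
    rw [Finset.sum_erase]
    · rw [hB]
      have := sqsum n L
      rw [this]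
    · rw [hBL L L le_rfl, mul_zero]
  rw [hkey, hQLL]
  have hm : ((n - 1 : ℕ) : ℝ) = (n : ℝ) - 1 := by
    push_cast [Nat.cast_sub (by omega : 1 ≤ n)]; ring
  rw [hm]
  ring
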